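/- Consider the last cell j = N, whose Euler-forward cell-average update (using the boundary conventions) is r̄_N^{new} = r̄_N + λ·ûc_{N−1/2} − λ·F̂_{N−1/2} + (Δt/2)·∑_{i=1,2}(c̃_N^i·q_N^i − z₁·r(x_N^i)·P_N^i). Assume all nodal concentration values are strictly positive; z₁ ≥ 0 and for i ∈ {1,2}: 6Δt·z₁·max{P_N^i,0} ≤ 1, if q_N^i ≥ 0 then c̃_N^i ≥ 0, and if q_N^i < 0 then c̃_N^i = c(x_N^i) and 6Δt(−q_N^i) < min{Φ_{N−1/2}, Φ_{N+1/2}}; and moreover α > 0, 6λ(α − u⁺_{N−1/2}) ≤ Φ_{N−1/2}, α̃ > D⁻_{N−1/2}/2, 6Λα̃ ≤ Φ_{N−1/2}, and 3Λ·D⁺_{N−1/2} ≤ Φ_{N+1/2}. Then r̄_N^{new} > 0. -/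

import Mathlib

noncomputable section

namespace DG1D

/-- Gauss constant `μ₁ = (3+√3)/6`. -/
def mu1 : ℝ := (3 + Real.sqrt 3) / 6

/-- Gauss constant `μ₂ = (3-√3)/6`. -/
def mu2 : ℝ := (3 - Real.sqrt 3) / 6

/-- Cell average `r̄_j = (r⁺_{j-1/2} + r⁻_{j+1/2})/2`.  Here `Φ j` denotes the nodal
porosity value `Φ_{j+1/2}` (so `Φ (j-1)` is `Φ_{j-1/2}`), `cP j` denotes the left-node
concentration trace `c⁺_{j-1/2}` of cell `j`, and `cM j` denotes the right-node trace
`c⁻_{j+1/2}` of cell `j`. -/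
def rbar (Φ cP cM : ℕ → ℝ) (j : ℕ) : ℝ :=
  (cP j * Φ (j - 1) + cM j * Φ j) / 2

/-- Convective flux `ûc_{j+1/2} = u⁺_{j+1/2}·c⁺_{j+1/2} - α·[c]_{j+1/2}` at the interior
node `j+1/2` (`u j` denotes `u⁺_{j+1/2}`; `c⁺_{j+1/2} = cP (j+1)`, `c⁻_{j+1/2} = cM j`). -/
def uc (u cP cM : ℕ → ℝ) (α : ℝ) (j : ℕ) : ℝ :=
  u j * cP (j + 1) - α * (cP (j + 1) - cM j)

/-- Diffusive flux `F̂_{j+1/2} = (D⁻·(c_x)⁻ + D⁺·(c_x)⁺)/2 + (α̃/Δx)·[c]_{j+1/2}` at the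
interior node `j+1/2`, with `(c_x)⁻_{j+1/2} = (c⁻_{j+1/2} - c⁺_{j-1/2})/Δx` and
`(c_x)⁺_{j+1/2} = (c⁻_{j+3/2} - c⁺_{j+1/2})/Δx`. -/
def Fhat (Dm Dp cP cM : ℕ → ℝ) (αt Δx : ℝ) (j : ℕ) : ℝ :=
  (Dm j * ((cM j - cP j) / Δx) + Dp j * ((cM (j + 1) - cP (j + 1)) / Δx)) / 2
    + (αt / Δx) * (cP (j + 1) - cM j)

/-- Value of the linear function `r` at Gauss point `i` of cell `j`:
`r(x_j^1) = μ₁·r⁺_{j-1/2} + μ₂·r⁻_{j+1/2}`, `r(x_j^2) = μ₂·r⁺_{j-1/2} + μ₁·r⁻_{j+1/2}`. -/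
def rG (Φ cP cM : ℕ → ℝ) (j : ℕ) (i : Fin 2) : ℝ :=
  if i = 0 then mu1 * (cP j * Φ (j - 1)) + mu2 * (cM j * Φ j)
  else mu2 * (cP j * Φ (j - 1)) + mu1 * (cM j * Φ j)

/-- Value of the linear function `c` at Gauss point `i` of cell `j`. -/
def cG (cP cM : ℕ → ℝ) (j : ℕ) (i : Fin 2) : ℝ :=
  if i = 0 then mu1 * cP j + mu2 * cM j else mu2 * cP j + mu1 * cM j

/-- Value of the linear interpolant of `Φ` at Gauss point `i` of cell `j`. -/
def phiG (Φ : ℕ → ℝ) (j : ℕ) (i : Fin 2) : ℝ :=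
  if i = 0 then mu1 * Φ (j - 1) + mu2 * Φ j else mu2 * Φ (j - 1) + mu1 * Φ j

/-- Convective flux with the boundary conventions `ûc_{1/2} = ûc_{N+1/2} = 0`. -/
def ucB (N : ℕ) (u cP cM : ℕ → ℝ) (α : ℝ) (j : ℕ) : ℝ :=
  if 1 ≤ j ∧ j ≤ N - 1 then uc u cP cM α j else 0

/-- Diffusive flux with the boundary conventions `F̂_{1/2} = F̂_{N+1/2} = 0`. -/
def FhatB (N : ℕ) (Dm Dp cP cM : ℕ → ℝ) (αt Δx : ℝ) (j : ℕ) : ℝ :=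
  if 1 ≤ j ∧ j ≤ N - 1 then Fhat Dm Dp cP cM αt Δx j else 0

/-- Velocity flux `û_{j+1/2}` with boundary conventions `û_{1/2} = û_{N+1/2} = 0`. -/
def uhatB (N : ℕ) (u : ℕ → ℝ) (j : ℕ) : ℝ :=
  if 1 ≤ j ∧ j ≤ N - 1 then u j else 0

/-- The Euler-forward cell-average update
`r̄_j^{new} = r̄_j + λ(ûc_{j-1/2} - ûc_{j+1/2}) - λ(F̂_{j-1/2} - F̂_{j+1/2})
  + (Δt/2)·∑_{i=1,2}(c̃_j^i·q_j^i - z₁·r(x_j^i)·P_j^i)`. -/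
def rbarnew (N : ℕ) (Φ cP cM u Dm Dp : ℕ → ℝ) (q ct P : ℕ → Fin 2 → ℝ)
    (α αt z1 Δx Δt : ℝ) (j : ℕ) : ℝ :=
  rbar Φ cP cM j
    + (Δt / Δx) * (ucB N u cP cM α (j - 1) - ucB N u cP cM α j)
    - (Δt / Δx) * (FhatB N Dm Dp cP cM αt Δx (j - 1) - FhatB N Dm Dp cP cM αt Δx j)
    + (Δt / 2) * ∑ i : Fin 2, (ct j i * q j i - z1 * rG Φ cP cM j i * P j i)

/-! The update is split into three equal thirds of `r̄_N`: one absorbs the convective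
flux, one the diffusive flux, and one, written through the exact two-point Gauss rule
`r̄_N = (r(x_N^1) + r(x_N^2)) / 2`, absorbs the source term pointwise at each Gauss point. -/

lemma mu1_pos : 0 < mu1 := by
  unfold mu1; positivity

lemma mu2_pos : 0 < mu2 := by
  have : Real.sqrt 3 < 3 := by
    rw [Real.sqrt_lt' (by norm_num)]; norm_num
  unfold mu2; linarith

lemma mu1_add_mu2 : mu1 + mu2 = 1 := by
  unfold mu1 mu2; ring

section Gauss

variable (Φ cP cM : ℕ → ℝ) (j : ℕ)

lemma rG_zero_add_rG_one : rG Φ cP cM j 0 + rG Φ cP cM j 1 = cP j * Φ (j - 1) + cM j * Φ j := by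
  simp only [rG, ↓reduceIte, Fin.isValue, one_ne_zero]
  linear_combination (cP j * Φ (j - 1) + cM j * Φ j) * mu1_add_mu2

variable {cP cM}

lemma cG_pos (ha : 0 < cP j) (hb : 0 < cM j) (i : Fin 2) : 0 < cG cP cM j i := by
  have := mu1_pos; have := mu2_pos
  unfold cG; split_ifs <;> positivity

lemma min_mul_cG_le_rG (ha : 0 ≤ cP j) (hb : 0 ≤ cM j) (i : Fin 2) :
    min (Φ (j - 1)) (Φ j) * cG cP cM j i ≤ rG Φ cP cM j i := by
  have key {x y : ℝ} (hx : 0 ≤ x) (hy : 0 ≤ y) :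
      min (Φ (j - 1)) (Φ j) * (x * cP j + y * cM j)
        ≤ x * (cP j * Φ (j - 1)) + y * (cM j * Φ j) := by
    nlinarith [mul_le_mul_of_nonneg_left (min_le_left (Φ (j - 1)) (Φ j)) (mul_nonneg hx ha),
      mul_le_mul_of_nonneg_left (min_le_right (Φ (j - 1)) (Φ j)) (mul_nonneg hy hb)]
  unfold cG rG
  split_ifs
  · exact key mu1_pos.le mu2_pos.le
  · exact key mu2_pos.le mu1_pos.le

end Gauss

/-- `ρ` and `c` are the values of `r` and `c` at one Gauss point, `m` the smaller nodal porosity. -/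
lemma gaussSource_pos {Δt z1 ρ c cs q P m : ℝ} (hΔt : 0 < Δt) (hm : 0 < m) (hc : 0 < c)
    (hmc : m * c ≤ ρ) (hz1 : 0 ≤ z1) (hP : 6 * Δt * z1 * max P 0 ≤ 1)
    (hq1 : 0 ≤ q → 0 ≤ cs) (hq2 : q < 0 → cs = c ∧ 6 * Δt * (-q) < m) :
    0 < ρ / 6 + Δt / 2 * (cs * q - z1 * ρ * P) := by
  have hρ : 0 < ρ := (mul_pos hm hc).trans_le hmc
  have hzP : Δt * (z1 * P) ≤ 1 / 6 := by
    nlinarith [mul_le_mul_of_nonneg_left (le_max_left P 0) (mul_nonneg hΔt.le hz1)]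
  have hdecay : Δt / 2 * (z1 * ρ * P) ≤ ρ / 12 := by
    nlinarith [mul_le_mul_of_nonneg_right hzP hρ.le]
  rcases le_or_gt 0 q with hq | hq
  · nlinarith [mul_nonneg (hq1 hq) hq]
  · obtain ⟨rfl, hqm⟩ := hq2 hq
    nlinarith [mul_lt_mul_of_pos_right hqm hc]

/-- Here `a, b` are the nodal values `c⁺_{N-1/2}, c⁻_{N+1/2}` of the last cell and
`m = c⁻_{N-1/2}` is the trace from its left neighbour. -/
lemma convection_pos {lam α u a b m Φm Φp : ℝ} (hlam : 0 < lam) (hα : 0 < α)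
    (ha : 0 < a) (hb : 0 < b) (hm : 0 < m) (hΦp : 0 < Φp)
    (hCFL : 6 * lam * (α - u) ≤ Φm) :
    0 < (a * Φm + b * Φp) / 6 + lam * (u * a - α * (a - m)) := by
  nlinarith [mul_le_mul_of_nonneg_right hCFL ha.le, mul_pos (mul_pos hlam hα) hm, mul_pos hb hΦp]

/-- As in `convection_pos`, with `p = c⁺_{N-3/2}` the other node of the neighbouring cell. -/
lemma diffusion_nonneg {Λ αt D₁ D₂ a b p m Φm Φp : ℝ} (hΛ : 0 < Λ)
    (ha : 0 < a) (hb : 0 < b) (hp : 0 < p) (hm : 0 < m)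
    (hD₁ : 0 ≤ D₁) (hD₂ : 0 ≤ D₂) (hαt : D₁ / 2 < αt)
    (hCFL₁ : 6 * Λ * αt ≤ Φm) (hCFL₂ : 3 * Λ * D₂ ≤ Φp) :
    0 ≤ (a * Φm + b * Φp) / 6 - Λ * (D₁ * (m - p) / 2 + D₂ * (b - a) / 2 + αt * (a - m)) := by
  nlinarith [mul_le_mul_of_nonneg_right hCFL₁ ha.le, mul_le_mul_of_nonneg_right hCFL₂ hb.le,
    mul_nonneg (mul_nonneg hΛ.le (by linarith : (0 : ℝ) ≤ D₁ / 2)) hp.le,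
    mul_nonneg (mul_nonneg hΛ.le (by linarith : (0 : ℝ) ≤ αt - D₁ / 2)) hm.le,
    mul_nonneg (mul_nonneg hΛ.le (by linarith : (0 : ℝ) ≤ D₂ / 2)) ha.le]

lemma div_mul_Fhat {Δx : ℝ} (hΔx : Δx ≠ 0) (Δt αt : ℝ) (Dm Dp cP cM : ℕ → ℝ) (j : ℕ) :
    Δt / Δx * Fhat Dm Dp cP cM αt Δx j
      = Δt / Δx ^ 2 * (Dm j * (cM j - cP j) / 2 + Dp j * (cM (j + 1) - cP (j + 1)) / 2
          + αt * (cP (j + 1) - cM j)) := by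
  unfold Fhat; field_simp

/-- Lemma 3.4, last cell (1D): positivity of
`r̄_N^{new} = r̄_N + λ·ûc_{N-1/2} - λ·F̂_{N-1/2} + (Δt/2)·∑_{i=1,2}(c̃_N^i·q_N^i - z₁·r(x_N^i)·P_N^i)`. -/
theorem last_cell_average_positive_1d
    (N : ℕ) (hN : 4 ≤ N) (Δx Δt : ℝ) (hΔx : 0 < Δx) (hΔt : 0 < Δt)
    (Φ cP cM u Dm Dp : ℕ → ℝ) (q ct P : ℕ → Fin 2 → ℝ) (α αt z1 : ℝ)
    (hΦ : ∀ j, j ≤ N → 0 < Φ j)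
    (hDm : ∀ j, 1 ≤ j → j ≤ N - 1 → 0 ≤ Dm j)
    (hDp : ∀ j, 1 ≤ j → j ≤ N - 1 → 0 ≤ Dp j)
    -- all nodal concentration values strictly positive
    (hc : ∀ j, 1 ≤ j → j ≤ N → 0 < cP j ∧ 0 < cM j)
    -- source conditions for cell N
    (hz1 : 0 ≤ z1)
    (hP : ∀ i : Fin 2, 6 * Δt * z1 * max (P N i) 0 ≤ 1)
    (hq1 : ∀ i : Fin 2, 0 ≤ q N i → 0 ≤ ct N i)
    (hq2 : ∀ i : Fin 2, q N i < 0 →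
      ct N i = cG cP cM N i ∧ 6 * Δt * (-q N i) < min (Φ (N - 1)) (Φ N))
    -- α > 0 and 6λ(α - u⁺_{N-1/2}) ≤ Φ_{N-1/2}
    (hα : 0 < α)
    (hCFL1 : 6 * (Δt / Δx) * (α - u (N - 1)) ≤ Φ (N - 1))
    -- α̃ > D⁻_{N-1/2}/2, 6Λα̃ ≤ Φ_{N-1/2}, 3Λ·D⁺_{N-1/2} ≤ Φ_{N+1/2}
    (hαt : Dm (N - 1) / 2 < αt)
    (hCFL2 : 6 * (Δt / Δx ^ 2) * αt ≤ Φ (N - 1))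
    (hCFL3 : 3 * (Δt / Δx ^ 2) * Dp (N - 1) ≤ Φ N) :
    0 < rbar Φ cP cM N
          + (Δt / Δx) * uc u cP cM α (N - 1)
          - (Δt / Δx) * Fhat Dm Dp cP cM αt Δx (N - 1)
          + (Δt / 2) * ∑ i : Fin 2, (ct N i * q N i - z1 * rG Φ cP cM N i * P N i) := by
  obtain ⟨hN₁, hN₁N, hN₁succ⟩ : 1 ≤ N - 1 ∧ N - 1 ≤ N ∧ N - 1 + 1 = N := by omega
  obtain ⟨ha, hb⟩ := hc N (by omega) le_rfl
  obtain ⟨hp, hm⟩ := hc (N - 1) hN₁ hN₁N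
  have hΦm := hΦ (N - 1) hN₁N
  have hΦp := hΦ N le_rfl
  have source (i : Fin 2) :
      0 < rG Φ cP cM N i / 6 + Δt / 2 * (ct N i * q N i - z1 * rG Φ cP cM N i * P N i) :=
    gaussSource_pos hΔt (lt_min hΦm hΦp) (cG_pos N ha hb i)
      (min_mul_cG_le_rG Φ N ha.le hb.le i) hz1 (hP i) (hq1 i) (hq2 i)
  have convection := convection_pos (div_pos hΔt hΔx) hα ha hb hm hΦp hCFL1
  have diffusion := diffusion_nonneg (div_pos hΔt (by positivity)) ha hb hp hm
    (hDm _ hN₁ le_rfl) (hDp _ hN₁ le_rfl) hαt hCFL2 hCFL3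
  rw [div_mul_Fhat hΔx.ne']
  simp only [rbar, uc, Fin.sum_univ_two, hN₁succ]
  linarith [source 0, source 1, rG_zero_add_rG_one Φ cP cM N]

end DG1D
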